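/- arXiv:1910.12428 — 12 statements merged into one kernel-verified Lean document; each statement's English description precedes it below -/
import Mathlib

section
/- Let P be a symmetric real n×n matrix whose sparsity graph is acyclic (a forest). Then P and 2·Diag(P) − P have the same characteristic polynomial (hence the same multiset of eigenvalues), where Diag(P) denotes the diagonal matrix whose diagonal entries are those of P. -/
open Matrix

section Aux

open SimpleGraph Walk

private lemma walk_path_parity {V : Type*} [DecidableEq V] {G : SimpleGraph V} (hA : G.IsAcyclic) :
    ∀ {u v : V} (w : G.Walk u v) (p : G.Walk u v), p.IsPath →
      Even (w.length + p.length) := by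
  intro u v w
  induction w with
  | nil =>
    intro p hp
    rw [Walk.isPath_iff_eq_nil] at hp
    subst hp; simp
  | @cons u x v h w' ih =>
    intro p hp
    have hq := w'.bypass_isPath
    obtain ⟨a, ha⟩ := ih w'.bypass hq
    have key : Even (w'.bypass.length + 1 + p.length) := by
      by_cases hu : u ∈ w'.bypass.support
      · have hq1 : (w'.bypass.takeUntil u hu).IsPath := hq.takeUntil hu
        have hq2 : (w'.bypass.dropUntil u hu).IsPath := hq.dropUntil hu
        have hlen : (w'.bypass.takeUntil u hu).length + (w'.bypass.dropUntil u hu).length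
            = w'.bypass.length := by
          rw [← Walk.length_append, Walk.take_spec]
        have hp2 : p = w'.bypass.dropUntil u hu :=
          congrArg Subtype.val (hA.path_unique ⟨p, hp⟩ ⟨_, hq2⟩)
        have hrev : (w'.bypass.takeUntil u hu).reverse = Walk.cons h Walk.nil := by
          have hpath2 : (Walk.cons h (Walk.nil : G.Walk x x)).IsPath := by
            rw [Walk.cons_isPath_iff]
            exact ⟨Walk.IsPath.nil, by simp [h.ne]⟩
          exact congrArg Subtype.val (hA.path_unique ⟨_, hq1.reverse⟩ ⟨_, hpath2⟩)
        have hl1 : (w'.bypass.takeUntil u hu).length = 1 := by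
          have := congrArg Walk.length hrev
          simpa using this
        refine ⟨p.length + 1, ?_⟩
        have : p.length = (w'.bypass.dropUntil u hu).length := by rw [hp2]
        omega
      · have hpath : (Walk.cons h w'.bypass).IsPath := by
          rw [Walk.cons_isPath_iff]; exact ⟨hq, hu⟩
        have hp2 : p = Walk.cons h w'.bypass :=
          congrArg Subtype.val (hA.path_unique ⟨p, hp⟩ ⟨_, hpath⟩)
        refine ⟨w'.bypass.length + 1, ?_⟩
        have : p.length = w'.bypass.length + 1 := by rw [hp2]; simp
        omega
    obtain ⟨b, hb⟩ := key
    refine ⟨a + b - w'.bypass.length, ?_⟩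
    simp only [Walk.length_cons]
    omega

private lemma walks_parity {V : Type*} [DecidableEq V] {G : SimpleGraph V} (hA : G.IsAcyclic)
    {u v : V} (w₁ w₂ : G.Walk u v) : Even (w₁.length + w₂.length) := by
  obtain ⟨a, ha⟩ := walk_path_parity hA w₁ w₁.bypass w₁.bypass_isPath
  obtain ⟨b, hb⟩ := walk_path_parity hA w₂ w₁.bypass w₁.bypass_isPath
  exact ⟨a + b - w₁.bypass.length, by omega⟩

private lemma charpoly_conj_aux {m : Type*} [Fintype m] [DecidableEq m]
    {R : Type*} [CommRing R] (D M : Matrix m m R) (hD : D * D = 1) :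
    (D * M * D).charpoly = M.charpoly := by
  have hDc : (D.map Polynomial.C) * (D.map Polynomial.C) = 1 := by
    rw [← Matrix.map_mul, hD]
    simp
  have hchar : charmatrix (D * M * D)
      = (D.map Polynomial.C) * charmatrix M * (D.map Polynomial.C) := by
    unfold charmatrix
    rw [mul_sub, sub_mul]
    congr 1
    · rw [scalar_apply, ← Matrix.smul_one_eq_diagonal, Matrix.mul_smul, Matrix.smul_mul,
        Matrix.mul_one, hDc]
    · simp only [RingHom.mapMatrix_apply]
      rw [← Matrix.map_mul, ← Matrix.map_mul]
  unfold Matrix.charpoly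
  rw [hchar, det_mul, det_mul, mul_comm, ← mul_assoc, ← det_mul, hDc]
  simp

end Aux

/-- Lemma 9 (lem_la): if the sparsity graph of a symmetric real matrix `P` is a forest,
then `P` and `2·Diag(P) − P` have the same characteristic polynomial. -/
theorem stmt0 {n : ℕ} (P : Matrix (Fin n) (Fin n) ℝ) (hP : P.IsSymm)
    (G : SimpleGraph (Fin n))
    (hG : ∀ i j, G.Adj i j ↔ i ≠ j ∧ P i j ≠ 0)
    (hforest : G.IsAcyclic) :
    P.charpoly = ((2 : ℝ) • Matrix.diagonal (fun i => P i i) - P).charpoly := by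
  classical
  -- representative of each connected component
  set r : Fin n → Fin n := fun v => (G.connectedComponentMk v).out with hr_def
  have hreach : ∀ v, G.Reachable (r v) v := by
    intro v
    apply SimpleGraph.ConnectedComponent.exact
    show Quot.mk _ _ = Quot.mk _ _
    exact Quot.out_eq _
  -- signs from 2-coloring by walk-length parity
  set c : Fin n → ℝ := fun v => if Odd ((hreach v).some.length) then (1 : ℝ) else -1
    with hc_def
  have hc_sq : ∀ v, c v * c v = 1 := by
    intro v
    by_cases h : Odd ((hreach v).some.length) <;> simp [hc_def, h]
  have hc_adj : ∀ i j, G.Adj i j → c i * c j = -1 := by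
    intro i j hadj
    have hrij : r i = r j := by
      simp only [hr_def]
      rw [SimpleGraph.ConnectedComponent.connectedComponentMk_eq_of_adj hadj]
    have heven : Even ((((hreach i).some.concat hadj).length)
        + (((hreach j).some.copy hrij.symm rfl).length)) :=
      walks_parity hforest _ _
    rw [SimpleGraph.Walk.length_concat, SimpleGraph.Walk.length_copy] at heven
    obtain ⟨k, hk⟩ := heven
    have hiff : Odd ((hreach i).some.length) ↔ ¬ Odd ((hreach j).some.length) := by
      rw [Nat.odd_iff, Nat.odd_iff]
      omega
    by_cases h : Odd ((hreach i).some.length)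
    · have h2 : ¬ Odd ((hreach j).some.length) := hiff.mp h
      simp [hc_def, h, h2]
    · have h2 : Odd ((hreach j).some.length) := by
        by_contra h2; exact h (hiff.mpr h2)
      simp [hc_def, h, h2]
  -- the conjugating diagonal matrix
  set D : Matrix (Fin n) (Fin n) ℝ := Matrix.diagonal c with hD_def
  have hDD : D * D = 1 := by
    rw [hD_def, Matrix.diagonal_mul_diagonal,
      show (fun i => c i * c i) = fun _ => (1 : ℝ) from funext hc_sq, Matrix.diagonal_one]
  have hQ : (2 : ℝ) • Matrix.diagonal (fun i => P i i) - P = D * P * D := by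
    ext i j
    rw [hD_def]
    simp only [Matrix.sub_apply, Matrix.smul_apply, Matrix.mul_diagonal,
      Matrix.diagonal_mul, Matrix.diagonal_apply, smul_eq_mul]
    by_cases hij : i = j
    · subst hij
      simp only [if_pos rfl, if_true]
      linear_combination (-(P i i)) * hc_sq i
    · simp only [if_neg hij]
      by_cases hz : P i j = 0
      · simp [hz]
      · have hadj : G.Adj i j := (hG i j).mpr ⟨hij, hz⟩
        linear_combination (-(P i j)) * hc_adj i j hadj
  rw [hQ, charpoly_conj_aux D P hDD]
end

section
/- Let M be a symmetric positive semidefinite real n×n matrix whose sparsity graph is acyclic (a forest). Then the matrix 2·Diag(M) − M is positive semidefinite. -/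
/-!
Properly 2-colour the sparsity graph (possible since a forest is bipartite) and let `s i = ±1`
according to the colour of `i`. Conjugating by `D = diagonal s` keeps the diagonal of `M` and flips
the sign of every nonzero off-diagonal entry, since those join vertices of different colours; thus
`D * M * D = 2 • Diag(M) - M`, which is positive semidefinite as a congruence of `M`.
-/

open Matrix

namespace SimpleGraph.Coloring

variable {V : Type*} {G : SimpleGraph V} (R : Type*) [Monoid R] [HasDistribNeg R]

def sign (c : G.Coloring (Fin 2)) (v : V) : R :=
  (-1) ^ (c v : ℕ)

variable {R}

lemma sign_mul_self (c : G.Coloring (Fin 2)) (v : V) : c.sign R v * c.sign R v = 1 := by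
  rw [sign, ← pow_add, ← two_mul, pow_mul, neg_one_sq, one_pow]

lemma sign_mul_sign_of_adj (c : G.Coloring (Fin 2)) {u v : V} (h : G.Adj u v) :
    c.sign R u * c.sign R v = -1 := by
  have hne := c.valid h
  unfold sign
  generalize c u = a, c v = b at hne ⊢
  fin_cases a <;> fin_cases b <;> simp_all

lemma star_sign {R : Type*} [Ring R] [StarRing R] (c : G.Coloring (Fin 2)) :
    star (c.sign R) = c.sign R :=
  funext fun v => by simp only [Pi.star_apply, sign, star_pow, star_neg, star_one]

end SimpleGraph.Coloring

namespace Matrix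

variable {ι R : Type*} [Fintype ι] [DecidableEq ι] [CommRing R]

lemma diagonal_mul_mul_diagonal_eq_two_smul_diagonal_sub {M : Matrix ι ι R} {s : ι → R}
    (hs : ∀ i, s i * s i = 1) (hoff : ∀ i j, i ≠ j → M i j ≠ 0 → s i * s j = -1) :
    diagonal s * M * diagonal s = (2 : R) • diagonal (fun i => M i i) - M := by
  ext i j
  rw [mul_diagonal, diagonal_mul, mul_right_comm, sub_apply, smul_apply, smul_eq_mul]
  rcases eq_or_ne i j with rfl | hij
  · rw [diagonal_apply_eq, hs, one_mul]
    ring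
  · rw [diagonal_apply_ne _ hij, mul_zero, zero_sub]
    by_cases hM : M i j = 0
    · simp [hM]
    · rw [hoff i j hij hM, neg_one_mul]

theorem PosSemidef.two_smul_diagonal_sub_of_isBipartite [PartialOrder R] [StarRing R]
    {M : Matrix ι ι R} (hM : M.PosSemidef) {G : SimpleGraph ι} (hG : G.IsBipartite)
    (hsparse : ∀ i j, i ≠ j → M i j ≠ 0 → G.Adj i j) :
    ((2 : R) • diagonal (fun i => M i i) - M).PosSemidef := by
  obtain ⟨c⟩ := hG
  rw [← diagonal_mul_mul_diagonal_eq_two_smul_diagonal_sub c.sign_mul_self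
    fun i j hij hMij => c.sign_mul_sign_of_adj (hsparse i j hij hMij)]
  have hcongr := hM.conjTranspose_mul_mul_same (diagonal (c.sign R))
  rwa [diagonal_conjTranspose, SimpleGraph.Coloring.star_sign] at hcongr

end Matrix

theorem stmt1_general {n : ℕ} (M : Matrix (Fin n) (Fin n) ℝ)
    (hpsd : M.PosSemidef)
    (G : SimpleGraph (Fin n))
    (hG : ∀ i j, G.Adj i j ↔ i ≠ j ∧ M i j ≠ 0)
    (hforest : G.IsAcyclic) :
    ((2 : ℝ) • Matrix.diagonal (fun i => M i i) - M).PosSemidef :=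
  hpsd.two_smul_diagonal_sub_of_isBipartite hforest.isBipartite fun i j hij hMij =>
    (hG i j).2 ⟨hij, hMij⟩

/-- If a symmetric PSD real matrix `M` has an acyclic sparsity graph, then
`2·Diag(M) − M` is positive semidefinite. -/
theorem stmt1 {n : ℕ} (M : Matrix (Fin n) (Fin n) ℝ) (hM : M.IsSymm)
    (hpsd : M.PosSemidef)
    (G : SimpleGraph (Fin n))
    (hG : ∀ i j, G.Adj i j ↔ i ≠ j ∧ M i j ≠ 0)
    (hforest : G.IsAcyclic) :
    ((2 : ℝ) • Matrix.diagonal (fun i => M i i) - M).PosSemidef :=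
  stmt1_general M hpsd G hG hforest
end

section
/- Let Σ and S be symmetric real p×p matrices. The 2p×2p block matrix [[Σ, Σ−S],[Σ−S, Σ]] is positive semidefinite if and only if S is positive semidefinite and 2Σ − S is positive semidefinite. -/
/-!
With `J = [1; 1]` and `K = [1; -1]`, the block matrix `M = [[Σ, Σ - S], [Σ - S, Σ]]` satisfies
`Jᴴ M J = 2 (2Σ - S)`, `Kᴴ M K = 2 S` and `2 M = J (2Σ - S) Jᴴ + K S Kᴴ`, the matrix form of
the polarization `(x+y)ᵀ(Σ - S/2)(x+y) + (x-y)ᵀ(S/2)(x-y)` of the quadratic form of `M`.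
Congruence and sums preserve positive semidefiniteness, so each side implies the other.
-/

open Matrix

namespace Matrix

variable {n R 𝕜 : Type*}

def extendedCov [Sub R] (Sigma S : Matrix n n R) : Matrix (n ⊕ n) (n ⊕ n) R :=
  fromBlocks Sigma (Sigma - S) (Sigma - S) Sigma

section Congruence

variable [Fintype n] [DecidableEq n] [CommRing R] [StarRing R] (Sigma S : Matrix n n R)

theorem conjTranspose_fromRows_one_one_mul_extendedCov_mul :
    (fromRows 1 1 : Matrix (n ⊕ n) n R).conjTranspose * extendedCov Sigma S *
        (fromRows 1 1 : Matrix (n ⊕ n) n R) =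
      (2 : R) • ((2 : R) • Sigma - S) := by
  rw [conjTranspose_fromRows_eq_fromCols_conjTranspose, conjTranspose_one, extendedCov,
    fromCols_mul_fromBlocks, fromCols_mul_fromRows]
  simp only [one_mul, mul_one]
  module

theorem conjTranspose_fromRows_one_neg_one_mul_extendedCov_mul :
    (fromRows 1 (-1) : Matrix (n ⊕ n) n R).conjTranspose * extendedCov Sigma S *
        (fromRows 1 (-1) : Matrix (n ⊕ n) n R) =
      (2 : R) • S := by
  rw [conjTranspose_fromRows_eq_fromCols_conjTranspose, conjTranspose_neg, conjTranspose_one,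
    extendedCov, fromCols_mul_fromBlocks, fromCols_mul_fromRows]
  simp only [one_mul, neg_mul, mul_neg, mul_one]
  module

theorem two_smul_extendedCov :
    (2 : R) • extendedCov Sigma S =
      (fromRows 1 1 : Matrix (n ⊕ n) n R) * ((2 : R) • Sigma - S) *
          (fromRows 1 1 : Matrix (n ⊕ n) n R).conjTranspose +
        (fromRows 1 (-1) : Matrix (n ⊕ n) n R) * S *
          (fromRows 1 (-1) : Matrix (n ⊕ n) n R).conjTranspose := by
  simp only [extendedCov, conjTranspose_fromRows_eq_fromCols_conjTranspose, conjTranspose_neg,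
    conjTranspose_one, fromRows_mul, mul_fromCols, fromCols_fromRows_eq_fromBlocks, fromBlocks_add,
    fromBlocks_smul, one_mul, mul_one, neg_mul, mul_neg, neg_neg]
  congr 1 <;> module

end Congruence

open scoped ComplexOrder

variable [RCLike 𝕜]

theorem posSemidef_of_two_smul {A : Matrix n n 𝕜} (h : ((2 : 𝕜) • A).PosSemidef) :
    A.PosSemidef := by
  simpa [smul_smul] using h.smul (a := (2⁻¹ : 𝕜)) (by positivity)

theorem posSemidef_extendedCov_iff [Fintype n] [DecidableEq n] (Sigma S : Matrix n n 𝕜) :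
    (extendedCov Sigma S).PosSemidef ↔ S.PosSemidef ∧ ((2 : 𝕜) • Sigma - S).PosSemidef := by
  constructor
  · intro h
    refine ⟨posSemidef_of_two_smul ?_, posSemidef_of_two_smul ?_⟩
    · rw [← conjTranspose_fromRows_one_neg_one_mul_extendedCov_mul]
      exact h.conjTranspose_mul_mul_same _
    · rw [← conjTranspose_fromRows_one_one_mul_extendedCov_mul]
      exact h.conjTranspose_mul_mul_same _
  · rintro ⟨hS, hT⟩
    refine posSemidef_of_two_smul ?_
    rw [two_smul_extendedCov]
    exact (hT.mul_mul_conjTranspose_same _).add (hS.mul_mul_conjTranspose_same _)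

end Matrix

theorem stmt2_general {p : ℕ} (Sigma S : Matrix (Fin p) (Fin p) ℝ) :
    (Matrix.fromBlocks Sigma (Sigma - S) (Sigma - S) Sigma).PosSemidef ↔
      S.PosSemidef ∧ ((2 : ℝ) • Sigma - S).PosSemidef :=
  Matrix.posSemidef_extendedCov_iff Sigma S

/-- Equation (7): the extended covariance matrix `[[Σ, Σ−S],[Σ−S, Σ]]` is PSD
iff `S ⪰ 0` and `2Σ − S ⪰ 0`. -/
theorem stmt2 {p : ℕ} (Sigma S : Matrix (Fin p) (Fin p) ℝ)
    (hSigma : Sigma.IsSymm) (hS : S.IsSymm) :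
    (Matrix.fromBlocks Sigma (Sigma - S) (Sigma - S) Sigma).PosSemidef ↔
      S.PosSemidef ∧ ((2 : ℝ) • Sigma - S).PosSemidef :=
  stmt2_general Sigma S
end

section
/- Let Σ be a positive definite real p×p matrix, let P = Σ⁻¹, and let S be the diagonal matrix with entries S_{jj} = 1/P_{jj}. Then the 2p×2p block matrix [[Σ, Σ−S],[Σ−S, Σ]] is positive semidefinite if and only if 2·Diag(P) − P is positive semidefinite. -/
/-!
Since `Σ` is positive definite, the extended matrix is positive semidefinite iff its Schur
complement `Σ - (Σ - S) Σ⁻¹ (Σ - S) = 2S - SPS` is. For `S = Diag(P)⁻¹` this complement equals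
`S (2 Diag(P) - P) S`, a congruence of `2 Diag(P) - P` by the invertible symmetric matrix `S`.
-/

open Matrix

namespace Matrix

variable {n K : Type*} [Fintype n] [DecidableEq n] [Field K]

theorem self_sub_sub_mul_inv_mul_sub {A S : Matrix n n K} (hA : IsUnit A) (hS : IsUnit S) :
    A - (A - S) * A⁻¹ * (A - S) = S * ((2 : K) • S⁻¹ - A⁻¹) * S := by
  have hA' := (isUnit_iff_isUnit_det A).mp hA
  have hS' := (isUnit_iff_isUnit_det S).mp hS
  simp only [sub_mul, mul_sub, Matrix.smul_mul, Matrix.mul_smul, mul_nonsing_inv _ hA',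
    nonsing_inv_mul _ hA', nonsing_inv_mul _ hS', Matrix.mul_assoc, Matrix.mul_one, Matrix.one_mul]
  module

theorem inv_diagonal_inv {v : n → K} (hv : ∀ i, v i ≠ 0) : (diagonal v⁻¹)⁻¹ = diagonal v :=
  inv_eq_left_inv <| by rw [diagonal_mul_diagonal, ← diagonal_one]; congr; ext i; simp [hv i]

end Matrix

/-- For the conditional independence knockoff choice `s_j = 1/P_jj` with `P = Σ⁻¹`,
the extended covariance matrix is PSD iff `2·Diag(P) − P ⪰ 0`. -/
theorem stmt3 {p : ℕ} (Sigma : Matrix (Fin p) (Fin p) ℝ) (hSigma : Sigma.PosDef)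
    (P : Matrix (Fin p) (Fin p) ℝ) (hP : P = Sigma⁻¹)
    (S : Matrix (Fin p) (Fin p) ℝ) (hS : S = Matrix.diagonal (fun j => (P j j)⁻¹)) :
    (Matrix.fromBlocks Sigma (Sigma - S) (Sigma - S) Sigma).PosSemidef ↔
      ((2 : ℝ) • Matrix.diagonal (fun j => P j j) - P).PosSemidef := by
  have hP_diag : ∀ j, P j j ≠ 0 := fun j => (hP ▸ hSigma.inv).diag_pos.ne'
  have hS_inv : S⁻¹ = diagonal fun j => P j j := hS ▸ inv_diagonal_inv hP_diag
  have hS_unit : IsUnit S := by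
    rw [hS, isUnit_diagonal, Pi.isUnit_iff]
    exact fun j => (inv_ne_zero (hP_diag j)).isUnit
  have hS_herm : S.IsHermitian := hS ▸ isHermitian_diagonal _
  have hB : (Sigma - S).IsHermitian := hSigma.isHermitian.sub hS_herm
  have := hSigma.isUnit.invertible
  nth_rw 2 [← hB.eq]
  rw [PosDef.fromBlocks₁₁ _ _ hSigma, hB.eq, self_sub_sub_mul_inv_mul_sub hSigma.isUnit hS_unit,
    ← hP, hS_inv]
  nth_rw 1 [← hS_herm.eq]
  exact hS_unit.posSemidef_star_left_conjugate_iff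
end

section
/- Let Σ be a positive definite real p×p matrix whose inverse P = Σ⁻¹ has an acyclic sparsity graph (i.e., X is a tree/forest Gaussian graphical model), and let S be the diagonal matrix with entries S_{jj} = 1/P_{jj}. Then the 2p×2p block matrix [[Σ, Σ−S],[Σ−S, Σ]] is positive semidefinite. -/
/-!
Colour the forest with signs `ε i = ±1`. Conjugating `P` by `diagonal ε` keeps its diagonal and
negates every nonzero off-diagonal entry, since those sit on edges; hence `2 D - P ⪰ 0` for
`D = diagonal P.diag`. Both Schur complements of `[[2 D, 1], [1, Σ]]` then turn `Σ⁻¹ ⪯ 2 D` into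
`(2 D)⁻¹ ⪯ Σ`, i.e. `S / 2 ⪯ Σ`, and the extended matrix is the sum of the positive semidefinite
matrices `[[1, 1], [1, 1]] ⊗ (Σ - S / 2)` and `[[1, -1], [-1, 1]] ⊗ S / 2`.
-/

open Matrix

namespace Matrix

variable {n : Type*} [Fintype n] [DecidableEq n]

theorem PosSemidef.two_smul_diagonal_diag_sub_of_isBipartite {R : Type*} [CommRing R]
    [PartialOrder R] [StarRing R] {M : Matrix n n R} (hM : M.PosSemidef)
    {G : SimpleGraph n} (hG : G.IsBipartite) (hsupp : ∀ i j, i ≠ j → M i j ≠ 0 → G.Adj i j) :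
    ((2 : R) • diagonal M.diag - M).PosSemidef := by
  obtain ⟨c⟩ := hG
  set ε : n → R := fun i => if c i = 0 then 1 else -1
  have hε_adj : ∀ i j, G.Adj i j → ε i * ε j = -1 := by
    intro i j hij
    have := c.valid hij
    simp only [ε]
    split_ifs <;> grind
  have hε_sq : ∀ i, ε i * ε i = 1 := fun i => by simp only [ε]; split_ifs <;> simp
  have hstar : (diagonal ε)ᴴ = diagonal ε := by
    rw [diagonal_conjTranspose]
    ext i j
    by_cases h : c i = 0 <;> simp [ε, h, diagonal_apply]
  have hflip : diagonal ε * M * (diagonal ε)ᴴ = (2 : R) • diagonal M.diag - M := by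
    ext i j
    rw [hstar, mul_diagonal, diagonal_mul, sub_apply, smul_apply, diagonal_apply]
    by_cases hij : i = j
    · subst hij
      simp only [if_true, diag_apply, smul_eq_mul]
      linear_combination (M i i) * hε_sq i
    · by_cases hz : M i j = 0
      · simp [hij, hz]
      · simp only [hij, if_false, smul_zero, zero_sub]
        linear_combination (M i j) * hε_adj i j (hsupp i j hij hz)
  exact hflip ▸ hM.mul_mul_conjTranspose_same _

theorem PosDef.posSemidef_sub_inv_of_posSemidef_sub_inv {K : Type*} [Field K] [PartialOrder K]
    [StarRing K] [StarOrderedRing K] {A B : Matrix n n K} (hA : A.PosDef) (hB : B.PosDef)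
    (h : (A - B⁻¹).PosSemidef) : (B - A⁻¹).PosSemidef := by
  let := hA.isUnit.invertible
  let := hB.isUnit.invertible
  have hblock : (fromBlocks A 1 1ᴴ B).PosSemidef := by
    rw [PosDef.fromBlocks₂₂ _ _ hB]
    simpa using h
  simpa using (PosDef.fromBlocks₁₁ _ _ hA).mp hblock

theorem PosSemidef.fromBlocks_self_sub_two_smul {R : Type*} [CommRing R] [PartialOrder R]
    [StarRing R] [AddLeftMono R] {A T : Matrix n n R}
    (hA : (A - T).PosSemidef) (hT : T.PosSemidef) :
    (fromBlocks A (A - (2 : R) • T) (A - (2 : R) • T) A).PosSemidef := by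
  have h₁ : (fromBlocks (A - T) (A - T) (A - T) (A - T)).PosSemidef := by
    simpa [conjTranspose_fromCols_eq_fromRows_conjTranspose, fromRows_mul_fromCols, mul_fromCols,
      conjTranspose_one]
      using hA.conjTranspose_mul_mul_same (fromCols (1 : Matrix n n R) (1 : Matrix n n R))
  have h₂ : (fromBlocks T (-T) (-T) T).PosSemidef := by
    simpa [conjTranspose_fromCols_eq_fromRows_conjTranspose, fromRows_mul_fromCols, mul_fromCols,
      conjTranspose_one]
      using hT.conjTranspose_mul_mul_same (fromCols (1 : Matrix n n R) (-1 : Matrix n n R))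
  convert h₁.add h₂ using 1
  rw [fromBlocks_add, two_smul]
  congr 1 <;> abel

end Matrix

/-- Theorem 5, case 1: for a tree (forest) Gaussian graphical model, the
conditional independence knockoff with `s_j = 1/P_jj` exists: the extended
covariance matrix is PSD. -/
theorem stmt4 {p : ℕ} (Sigma : Matrix (Fin p) (Fin p) ℝ) (hSigma : Sigma.PosDef)
    (P : Matrix (Fin p) (Fin p) ℝ) (hP : P = Sigma⁻¹)
    (G : SimpleGraph (Fin p))
    (hG : ∀ i j, G.Adj i j ↔ i ≠ j ∧ P i j ≠ 0)
    (hforest : G.IsAcyclic)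
    (S : Matrix (Fin p) (Fin p) ℝ) (hS : S = Matrix.diagonal (fun j => (P j j)⁻¹)) :
    (Matrix.fromBlocks Sigma (Sigma - S) (Sigma - S) Sigma).PosSemidef := by
  have hPd : P.PosDef := hP ▸ hSigma.inv
  let D : Matrix (Fin p) (Fin p) ℝ := (2 : ℝ) • diagonal P.diag
  have hD : D.PosDef := (PosDef.diagonal fun _ => hPd.diag_pos).smul two_pos
  have hDP : (D - Sigma⁻¹).PosSemidef := hP ▸
    hPd.posSemidef.two_smul_diagonal_diag_sub_of_isBipartite hforest.isBipartite
      fun i j hij hPij => (hG i j).2 ⟨hij, hPij⟩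
  have hS_eq : S = (2 : ℝ) • D⁻¹ := by
    have hSD : (2 : ℝ)⁻¹ • S * D = 1 := by
      rw [hS, smul_mul_smul_comm, diagonal_mul_diagonal]
      ext i j
      rcases eq_or_ne i j with rfl | hij
      · simp [hPd.diag_pos.ne']
      · simp [hij]
    rw [inv_eq_left_inv hSD, smul_smul]
    norm_num
  rw [hS_eq]
  exact (hD.posSemidef_sub_inv_of_posSemidef_sub_inv hSigma hDP).fromBlocks_self_sub_two_smul
    hD.inv.posSemidef
end

section
/- Let Σ be a positive definite real p×p matrix whose inverse P = Σ⁻¹ is diagonally dominant, i.e., for every j, ∑_{k ≠ j} |P_{jk}| ≤ P_{jj}. Let S be the diagonal matrix with entries S_{jj} = 1/P_{jj}. Then the 2p×2p block matrix [[Σ, Σ−S],[Σ−S, Σ]] is positive semidefinite. -/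
/-!
Let `D` be the diagonal part of `P`, so that `S = D⁻¹`, and put `T = S / 2`. Flipping the signs of
the off-diagonal entries keeps a matrix diagonally dominant, so `P` and `2D - P` are both
diagonally dominant, hence positive semidefinite, and `T (P + (2D - P)) = 1`. Therefore
`P - P T P = P (P + (2D - P))⁻¹ (2D - P)`, the parallel sum of two positive semidefinite matrices,
is positive semidefinite; conjugating by `Σ = P⁻¹` gives `Σ - T ⪰ 0`. Finally, with `K = Σ - T` and
`L = T`, the block matrix is `[[K + L, K - L], [K - L, K + L]]`, which is congruent to
`diag(K, L)`.
-/

open Matrix Finset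

namespace Matrix

variable {n : Type*} [Fintype n] [DecidableEq n]

section PosSemidef

variable {R : Type*} [CommRing R] [PartialOrder R] [StarRing R] [StarOrderedRing R]

theorem PosSemidef.fromBlocks_add_sub {K L : Matrix n n R} (hK : K.PosSemidef)
    (hL : L.PosSemidef) : (fromBlocks (K + L) (K - L) (K - L) (K + L)).PosSemidef := by
  have h := (hK.conjTranspose_mul_mul_same (fromCols (1 : Matrix n n R) (1 : Matrix n n R))).add
    (hL.conjTranspose_mul_mul_same (fromCols (1 : Matrix n n R) (-1 : Matrix n n R)))
  simp only [conjTranspose_fromCols_eq_fromRows_conjTranspose, conjTranspose_one,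
    conjTranspose_neg, fromRows_mul, mul_fromCols, fromRows_neg, fromCols_fromRows_eq_fromBlocks,
    fromBlocks_add, Matrix.one_mul, Matrix.mul_one, Matrix.neg_mul, Matrix.mul_neg, neg_neg,
    ← sub_eq_add_neg] at h
  exact h

theorem PosSemidef.sub_mul_mul_of_mul_add_eq_one {A B T : Matrix n n R} (hA : A.PosSemidef)
    (hB : B.PosSemidef) (hT : T.IsHermitian) (hTAB : T * (A + B) = 1) :
    (A - A * T * A).PosSemidef := by
  have hTB : T * B = 1 - T * A := by rw [← hTAB, Matrix.mul_add, add_sub_cancel_left]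
  have key : A - A * T * A = (T * A)ᴴ * B * (T * A) + (T * B)ᴴ * A * (T * B) := by
    rw [conjTranspose_mul, hA.isHermitian.eq, hT.eq, hTB, Matrix.mul_assoc A T B, hTB]
    simp only [conjTranspose_sub, conjTranspose_one, conjTranspose_mul, hA.isHermitian.eq, hT.eq]
    noncomm_ring
  rw [key]
  exact (hB.conjTranspose_mul_mul_same _).add (hA.conjTranspose_mul_mul_same _)

end PosSemidef

theorem IsHermitian.sum_sum_erase_abs_mul_sq {A : Matrix n n ℝ} (hA : A.IsHermitian)
    (x : n → ℝ) :
    ∑ j, ∑ k ∈ univ.erase j, |A j k| * x k ^ 2 = ∑ j, (∑ k ∈ univ.erase j, |A j k|) * x j ^ 2 := by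
  rw [sum_comm' (t' := univ) (s' := fun k => univ.erase k) (by simp [ne_comm])]
  refine sum_congr rfl fun k _ => ?_
  rw [sum_mul]
  refine sum_congr rfl fun j _ => ?_
  rw [← hA.apply k j, star_trivial]

theorem IsHermitian.posSemidef_of_sum_abs_le {A : Matrix n n ℝ} (hA : A.IsHermitian)
    (hdom : ∀ j, ∑ k ∈ univ.erase j, |A j k| ≤ A j j) : A.PosSemidef := by
  refine .of_dotProduct_mulVec_nonneg hA fun x => ?_
  have hpair : ∀ j k, -(|A j k| * (x j ^ 2 + x k ^ 2)) / 2 ≤ x j * (A j k * x k) := fun j k => by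
    cases abs_cases (A j k) <;> nlinarith [sq_nonneg (x j - x k), sq_nonneg (x j + x k)]
  have hoff : ∑ j, ∑ k ∈ univ.erase j, -(|A j k| * (x j ^ 2 + x k ^ 2)) / 2
      = -∑ j, (∑ k ∈ univ.erase j, |A j k|) * x j ^ 2 := by
    simp only [neg_div, sum_neg_distrib, mul_add, add_div, sum_add_distrib, ← sum_div, ← sum_mul,
      hA.sum_sum_erase_abs_mul_sq]
    ring
  calc (0 : ℝ) ≤ ∑ j, (A j j - ∑ k ∈ univ.erase j, |A j k|) * x j ^ 2 :=
        sum_nonneg fun j _ => mul_nonneg (sub_nonneg.mpr (hdom j)) (sq_nonneg _)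
    _ = ∑ j, (x j * (A j j * x j) + ∑ k ∈ univ.erase j, -(|A j k| * (x j ^ 2 + x k ^ 2)) / 2) := by
        rw [sum_add_distrib, hoff, ← sub_eq_add_neg, ← sum_sub_distrib]
        exact sum_congr rfl fun j _ => by ring
    _ ≤ ∑ j, (x j * (A j j * x j) + ∑ k ∈ univ.erase j, x j * (A j k * x k)) := by
        gcongr with j _ k _
        exact hpair j k
    _ = star x ⬝ᵥ (A *ᵥ x) := by
        simp only [dotProduct, mulVec, star_trivial, mul_sum]
        exact sum_congr rfl fun j _ => add_sum_erase _ (fun k => x j * (A j k * x k)) (mem_univ j)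

theorem IsHermitian.posSemidef_two_smul_diagonal_diag_sub {A : Matrix n n ℝ} (hA : A.IsHermitian)
    (hdom : ∀ j, ∑ k ∈ univ.erase j, |A j k| ≤ A j j) :
    ((2 : ℝ) • diagonal A.diag - A).PosSemidef := by
  refine IsHermitian.posSemidef_of_sum_abs_le ?_ fun j => ?_
  · exact ((isHermitian_diagonal _).smul (.all _)).sub hA
  · have hdiag : ((2 : ℝ) • diagonal A.diag - A) j j = A j j := by
      simp only [sub_apply, smul_apply, diagonal_apply_eq, diag_apply, smul_eq_mul]
      ring
    have hoff : ∀ k ∈ univ.erase j, |((2 : ℝ) • diagonal A.diag - A) j k| = |A j k| :=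
      fun k hk => by simp [diagonal_apply_ne _ (ne_of_mem_erase hk).symm]
    rw [hdiag, sum_congr rfl hoff]
    exact hdom j

end Matrix

/-- Theorem 5, case 2: if the precision matrix `P = Σ⁻¹` is diagonally dominant,
the conditional independence knockoff with `s_j = 1/P_jj` exists: the extended
covariance matrix is PSD. -/
theorem stmt5 {p : ℕ} (Sigma : Matrix (Fin p) (Fin p) ℝ) (hSigma : Sigma.PosDef)
    (P : Matrix (Fin p) (Fin p) ℝ) (hP : P = Sigma⁻¹)
    (hdom : ∀ j, ∑ k ∈ Finset.univ.erase j, |P j k| ≤ P j j)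
    (S : Matrix (Fin p) (Fin p) ℝ) (hS : S = Matrix.diagonal (fun j => (P j j)⁻¹)) :
    (Matrix.fromBlocks Sigma (Sigma - S) (Sigma - S) Sigma).PosSemidef := by
  have hPpos : P.PosDef := hP ▸ hSigma.inv
  have hSD : S * diagonal P.diag = 1 := by
    rw [hS, diagonal_mul_diagonal, ← diagonal_one]
    exact congrArg diagonal (funext fun j => inv_mul_cancel₀ hPpos.diag_pos.ne')
  set T : Matrix (Fin p) (Fin p) ℝ := (2 : ℝ)⁻¹ • S
  have hT : T.PosSemidef :=
    (hS ▸ PosSemidef.diagonal fun j => (inv_pos.2 hPpos.diag_pos).le).smul (by norm_num)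
  have hPT : (P - P * T * P).PosSemidef := by
    refine hPpos.posSemidef.sub_mul_mul_of_mul_add_eq_one
      (hPpos.isHermitian.posSemidef_two_smul_diagonal_diag_sub hdom) hT.isHermitian ?_
    rw [add_sub_cancel, smul_mul_smul_comm, inv_mul_cancel₀ two_ne_zero, one_smul, hSD]
  have hSigmaT : (Sigma - T).PosSemidef := by
    have hdet : IsUnit Sigma.det := hSigma.isUnit.map detMonoidHom
    have hconj : Sigmaᴴ * (P - P * T * P) * Sigma = Sigma - T := by
      rw [hSigma.isHermitian.eq, hP]
      simp [Matrix.mul_sub, Matrix.sub_mul, Matrix.mul_assoc, nonsing_inv_mul _ hdet,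
        mul_nonsing_inv_cancel_left _ _ hdet]
    exact hconj ▸ hPT.conjTranspose_mul_mul_same Sigma
  simpa [sub_sub, ← two_smul ℝ T, T] using hSigmaT.fromBlocks_add_sub hT
end

section
/- Let M be a symmetric invertible real n×n matrix whose sparsity graph is acyclic (a forest), let D = Diag(M), and assume 2D − M is invertible. Then for every index j, the j-th diagonal entry of (2D − M)⁻¹ equals the j-th diagonal entry of M⁻¹. -/
/-!
A forest is bipartite. If `ε i = ±1` records the colour of vertex `i` and `Δ = diagonal ε`, then
conjugation by `Δ` fixes the diagonal of `M` and negates every entry along an edge, so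
`2D − M = Δ M Δ`. Since `Δ⁻¹ = Δ`, this gives `(2D − M)⁻¹ = Δ M⁻¹ Δ`, whose diagonal is that
of `M⁻¹`.
-/

open Matrix

lemma neg_one_pow_mul_neg_one_pow_of_ne {R : Type*} [Monoid R] [HasDistribNeg R] {a b : Fin 2}
    (h : a ≠ b) : (-1 : R) ^ (a : ℕ) * (-1) ^ (b : ℕ) = -1 := by
  fin_cases a <;> fin_cases b <;> simp_all

section

variable {R ι : Type*} [CommRing R] [Fintype ι] [DecidableEq ι]

lemma two_smul_diagonal_sub_eq_diagonal_mul_mul_diagonal (M : Matrix ι ι R) (ε : ι → R)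
    (hsq : ∀ i, ε i * ε i = 1) (hoff : ∀ i j, i ≠ j → M i j ≠ 0 → ε i * ε j = -1) :
    (2 : R) • diagonal (fun i => M i i) - M = diagonal ε * M * diagonal ε := by
  ext i j
  rw [mul_diagonal, diagonal_mul, Matrix.sub_apply, Matrix.smul_apply, smul_eq_mul,
    mul_right_comm]
  by_cases hij : i = j
  · subst hij
    rw [hsq, diagonal_apply_eq]
    ring
  · rw [diagonal_apply_ne _ hij]
    by_cases hMij : M i j = 0
    · simp [hMij]
    · rw [hoff i j hij hMij]
      ring

lemma inv_diagonal_mul_mul_diagonal_apply_self (M : Matrix ι ι R) (ε : ι → R)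
    (hsq : ∀ i, ε i * ε i = 1) (j : ι) :
    (diagonal ε * M * diagonal ε)⁻¹ j j = M⁻¹ j j := by
  have hΔ : (diagonal ε)⁻¹ = diagonal ε :=
    inv_eq_right_inv (by rw [diagonal_mul_diagonal, funext hsq, diagonal_one])
  rw [Matrix.mul_inv_rev, Matrix.mul_inv_rev, hΔ, ← Matrix.mul_assoc, mul_diagonal, diagonal_mul,
    mul_right_comm, hsq, one_mul]

theorem inv_two_smul_diagonal_sub_apply_self_of_coloring {G : SimpleGraph ι}
    (C : G.Coloring (Fin 2)) (M : Matrix ι ι R)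
    (hM : ∀ i j, i ≠ j → M i j ≠ 0 → G.Adj i j) (j : ι) :
    ((2 : R) • diagonal (fun i => M i i) - M)⁻¹ j j = M⁻¹ j j := by
  set ε : ι → R := fun i => (-1) ^ (C i : ℕ)
  have hsq : ∀ i, ε i * ε i = 1 := fun i => pow_mul_pow_eq_one _ (by norm_num)
  have hoff : ∀ i j, i ≠ j → M i j ≠ 0 → ε i * ε j = -1 := fun i j hij hMij =>
    neg_one_pow_mul_neg_one_pow_of_ne (C.valid (hM i j hij hMij))
  rw [two_smul_diagonal_sub_eq_diagonal_mul_mul_diagonal M ε hsq hoff,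
    inv_diagonal_mul_mul_diagonal_apply_self M ε hsq]

end

theorem stmt9_general {n : ℕ} (M : Matrix (Fin n) (Fin n) ℝ)
    (G : SimpleGraph (Fin n)) (hG : ∀ i j, G.Adj i j ↔ i ≠ j ∧ M i j ≠ 0)
    (hforest : G.IsAcyclic)
    (D : Matrix (Fin n) (Fin n) ℝ) (hD : D = Matrix.diagonal (fun i => M i i)) :
    ∀ j, (((2 : ℝ) • D - M)⁻¹) j j = M⁻¹ j j := by
  subst hD
  exact inv_two_smul_diagonal_sub_apply_self_of_coloring hforest.coloringTwo M
    fun i j hij hMij => (hG i j).2 ⟨hij, hMij⟩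

/-- Key step of Theorem 6: for a symmetric invertible matrix `M` with forest
sparsity graph and `D = Diag(M)` with `2D − M` invertible, the diagonals of
`(2D − M)⁻¹` and `M⁻¹` agree. -/
theorem stmt9 {n : ℕ} (M : Matrix (Fin n) (Fin n) ℝ) (hM : M.IsSymm)
    (hMinv : IsUnit M.det)
    (G : SimpleGraph (Fin n)) (hG : ∀ i j, G.Adj i j ↔ i ≠ j ∧ M i j ≠ 0)
    (hforest : G.IsAcyclic)
    (D : Matrix (Fin n) (Fin n) ℝ) (hD : D = Matrix.diagonal (fun i => M i i))
    (h2D : IsUnit ((2 : ℝ) • D - M).det) :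
    ∀ j, (((2 : ℝ) • D - M)⁻¹) j j = M⁻¹ j j :=
  stmt9_general M G hG hforest D hD
end

section
/- Let Σ be a positive semidefinite real p×p matrix, and for x ∈ ℝᵖ write ‖x‖_Σ² = xᵀΣx. Let d, λ > 0 and θ, ξ ∈ ℝᵖ, and let η ∈ ℝᵖ satisfy the optimality inequality (1/(2d))‖η − (θ+ξ)‖_Σ² + λ‖η‖₁ ≤ (1/(2d))‖ξ‖_Σ² + λ‖θ‖₁ (which holds in particular when η minimizes t ↦ (1/(2d))‖t − (θ+ξ)‖_Σ² + λ‖t‖₁ over ℝᵖ). Then ‖η − θ‖_Σ² ≤ max(4dλ‖θ‖₁, 16‖ξ‖_Σ²). -/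
/-!
Put `u = η - θ`. Expanding `‖u - ξ‖_Σ²` in the optimality inequality and dropping `λ‖η‖₁ ≥ 0`
gives `‖u‖_Σ² ≤ 2⟨u, ξ⟩_Σ + 2dλ‖θ‖₁`. If `‖u‖_Σ² > 16‖ξ‖_Σ²`, Cauchy–Schwarz bounds the cross
term by `‖u‖_Σ‖ξ‖_Σ ≤ ‖u‖_Σ²/4`, so half of `‖u‖_Σ²` is absorbed and `‖u‖_Σ² ≤ 4dλ‖θ‖₁`.
-/

open Matrix

namespace Matrix

variable {n R : Type*} [Fintype n] [CommRing R] [StarRing R] [TrivialStar R]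

lemma IsHermitian.dotProduct_mulVec_comm {M : Matrix n n R} (hM : M.IsHermitian) (x y : n → R) :
    x ⬝ᵥ (M *ᵥ y) = y ⬝ᵥ (M *ᵥ x) := by
  rw [dotProduct_mulVec, ← mulVec_transpose, ← conjTranspose_eq_transpose_of_trivial, hM.eq,
    dotProduct_comm]

lemma IsHermitian.dotProduct_mulVec_sub_sub {M : Matrix n n R} (hM : M.IsHermitian)
    (x y : n → R) :
    (x - y) ⬝ᵥ (M *ᵥ (x - y)) = x ⬝ᵥ (M *ᵥ x) - 2 * x ⬝ᵥ (M *ᵥ y) + y ⬝ᵥ (M *ᵥ y) := by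
  simp only [mulVec_sub, sub_dotProduct, dotProduct_sub, hM.dotProduct_mulVec_comm y x]
  ring

variable [LinearOrder R] [IsStrictOrderedRing R]

lemma PosSemidef.dotProduct_mulVec_sq_le {M : Matrix n n R} (hM : M.PosSemidef) (x y : n → R) :
    (x ⬝ᵥ (M *ᵥ y)) ^ 2 ≤ x ⬝ᵥ (M *ᵥ x) * y ⬝ᵥ (M *ᵥ y) := by
  classical
  have := LinearMap.BilinForm.apply_mul_apply_le_of_forall_zero_le (toLinearMap₂' R M)
    (fun v ↦ by simpa [toLinearMap₂'_apply'] using hM.dotProduct_mulVec_nonneg v) x y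
  simpa only [toLinearMap₂'_apply', hM.isHermitian.dotProduct_mulVec_comm y x, ← sq] using this

end Matrix

lemma le_two_mul_add_of_prox_le {a s b d lam x y : ℝ} (hd : 0 < d) (hlam : 0 ≤ lam)
    (hx : 0 ≤ x) (h : 1 / (2 * d) * (a - 2 * s + b) + lam * x ≤ 1 / (2 * d) * b + lam * y) :
    a ≤ 2 * s + 2 * d * lam * y := by
  have : (a - 2 * s) / (2 * d) ≤ lam * y := by
    rw [div_eq_mul_one_div, mul_comm]
    linarith [mul_add (1 / (2 * d)) (a - 2 * s) b, mul_nonneg hlam hx]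
  rw [div_le_iff₀ (by positivity)] at this
  linarith

lemma le_max_of_sq_le_mul_of_le_two_mul_add {a b s c : ℝ} (ha : 0 ≤ a) (hs : s ^ 2 ≤ a * b)
    (h : a ≤ 2 * s + c) : a ≤ max (2 * c) (16 * b) := by
  rcases le_or_gt a (16 * b) with hb | hb
  · exact le_max_of_le_right hb
  · have : s ≤ a / 4 := by
      by_contra! hs'
      nlinarith [mul_lt_mul'' hs' hs' (by positivity) (by positivity)]
    exact le_max_of_le_left (by linarith)

/-- Deterministic proximal-operator bound from the appendix (bound on τ in
Theorem 1): if `η` satisfies the optimality inequality of the Σ-proximal lasso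
objective, then `‖η − θ‖_Σ² ≤ max(4dλ‖θ‖₁, 16‖ξ‖_Σ²)`. -/
theorem stmt12 {p : ℕ} (Sigma : Matrix (Fin p) (Fin p) ℝ) (hSigma : Sigma.PosSemidef)
    (d lam : ℝ) (hd : 0 < d) (hlam : 0 < lam)
    (θ ξ η : Fin p → ℝ)
    (hopt : (1 / (2 * d)) * ((η - (θ + ξ)) ⬝ᵥ (Sigma *ᵥ (η - (θ + ξ)))) + lam * ∑ j, |η j| ≤
        (1 / (2 * d)) * (ξ ⬝ᵥ (Sigma *ᵥ ξ)) + lam * ∑ j, |θ j|) :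
    (η - θ) ⬝ᵥ (Sigma *ᵥ (η - θ)) ≤
      max (4 * d * lam * ∑ j, |θ j|) (16 * (ξ ⬝ᵥ (Sigma *ᵥ ξ))) := by
  rw [show η - (θ + ξ) = η - θ - ξ by abel, hSigma.isHermitian.dotProduct_mulVec_sub_sub] at hopt
  have hkey := le_two_mul_add_of_prox_le hd hlam.le
    (Finset.sum_nonneg fun j _ ↦ abs_nonneg (η j)) hopt
  have hnonneg := hSigma.dotProduct_mulVec_nonneg (η - θ)
  rw [star_trivial] at hnonneg
  convert le_max_of_sq_le_mul_of_le_two_mul_add hnonneg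
    (hSigma.dotProduct_mulVec_sq_le (η - θ) ξ) hkey using 2
  ring
end

section
/- Let (Ω, ℙ) be a probability space carrying random variables Z, Υ, Θ with Z standard Gaussian, Z independent of the pair (Θ, Υ), and Υ ≥ 0 almost surely. Let L > 0 satisfy ℙ[Υ > L] ≤ L, and let τ > 0 and t > 0. Then ℙ[|τ·√Υ·Z + Θ| ≥ t] ≥ ℙ[|Θ| > 2t] − 2·Q(t/(τ√L)) − L. -/
open MeasureTheory ProbabilityTheory

/-! If `|Θ| > 2t` but `|τ√Υ Z + Θ| < t`, then `τ√Υ |Z| > t`, so either `Υ > L` or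
`|Z| > t / (τ√L)`. A union bound over these three events, with the Gaussian tail
`ℙ[|Z| > r] ≤ 2 Q(r)`, gives the claim. -/

/-- Standard Gaussian tail probability `Q(r) = ℙ[ξ > r]` for `ξ ~ N(0,1)`. -/
noncomputable def gaussQ (r : ℝ) : ℝ :=
  ((gaussianReal 0 1) (Set.Ioi r)).toReal

open scoped NNReal

lemma gaussianReal_Iio_neg (v : ℝ≥0) (r : ℝ) :
    gaussianReal 0 v (Set.Iio (-r)) = gaussianReal 0 v (Set.Ioi r) := by
  conv_rhs => rw [← neg_zero, ← gaussianReal_map_neg,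
    Measure.map_apply measurable_neg measurableSet_Ioi, Set.neg_preimage, Set.neg_Ioi]

lemma gaussianReal_real_abs_gt_le (v : ℝ≥0) (r : ℝ) :
    (gaussianReal 0 v).real {x | r < |x|} ≤ 2 * (gaussianReal 0 v).real (Set.Ioi r) := by
  have hsubset : {x : ℝ | r < |x|} ⊆ Set.Iio (-r) ∪ Set.Ioi r := by
    intro x (hx : r < |x|)
    rcases lt_abs.mp hx with h | h
    · exact Or.inr h
    · exact Or.inl (lt_neg.mp h)
  calc (gaussianReal 0 v).real {x | r < |x|}
      ≤ (gaussianReal 0 v).real (Set.Iio (-r)) + (gaussianReal 0 v).real (Set.Ioi r) :=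
        (measureReal_mono hsubset).trans (measureReal_union_le _ _)
    _ = 2 * (gaussianReal 0 v).real (Set.Ioi r) := by
        rw [measureReal_def, gaussianReal_Iio_neg, ← measureReal_def, two_mul]

lemma measureReal_abs_gt_le_two_mul_gaussQ {Ω : Type*} [MeasurableSpace Ω] {μ : Measure Ω}
    {Z : Ω → ℝ} (hZm : Measurable Z) (hZ : μ.map Z = gaussianReal 0 1) (r : ℝ) :
    μ.real {ω | r < |Z ω|} ≤ 2 * gaussQ r := by
  have hmeas : MeasurableSet {x : ℝ | r < |x|} := measurableSet_lt measurable_const measurable_abs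
  rw [← Set.preimage_ofPred_eq (p := fun x => r < |x|), ← map_measureReal_apply hZm hmeas, hZ]
  exact gaussianReal_real_abs_gt_le 1 r

lemma lt_abs_of_two_mul_lt_abs_of_abs_add_lt {t w θ : ℝ} (hθ : 2 * t < |θ|)
    (h : |w + θ| < t) : t < |w| := by
  have := abs_sub (w + θ) w
  rw [add_sub_cancel_left] at this
  linarith

lemma div_lt_abs_of_lt_abs_mul_sqrt {τ L y z t : ℝ} (hτ : 0 < τ) (hL : 0 < L) (hy : y ≤ L)
    (h : t < |τ * √y * z|) : t / (τ * √L) < |z| := by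
  have hτL : 0 < τ * √L := mul_pos hτ (Real.sqrt_pos.mpr hL)
  rw [div_lt_iff₀ hτL]
  calc t < |τ * √y * z| := h
    _ = τ * √y * |z| := by rw [abs_mul, abs_of_nonneg (by positivity)]
    _ ≤ τ * √L * |z| := by gcongr
    _ = |z| * (τ * √L) := mul_comm _ _

theorem stmt14_general {Ω : Type*} [MeasurableSpace Ω] (μ : Measure Ω) [IsProbabilityMeasure μ]
    (Z Υ Θ : Ω → ℝ) (hZm : Measurable Z)
    (hZ : μ.map Z = gaussianReal 0 1)
    (L τ t : ℝ) (hL : 0 < L) (hτ : 0 < τ)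
    (hLtail : (μ {ω | L < Υ ω}).toReal ≤ L) :
    (μ {ω | 2 * t < |Θ ω|}).toReal - 2 * gaussQ (t / (τ * Real.sqrt L)) - L ≤
      (μ {ω | t ≤ |τ * Real.sqrt (Υ ω) * Z ω + Θ ω|}).toReal := by
  set r := t / (τ * Real.sqrt L)
  have hcover : {ω | 2 * t < |Θ ω|} ⊆
      {ω | t ≤ |τ * Real.sqrt (Υ ω) * Z ω + Θ ω|} ∪ {ω | L < Υ ω} ∪ {ω | r < |Z ω|} := by
    intro ω hΘ
    by_contra hnot
    simp only [Set.mem_union, Set.mem_ofPred_eq, not_or, not_le, not_lt] at hΘ hnot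
    obtain ⟨⟨hsum, hΥ⟩, hZω⟩ := hnot
    exact hZω.not_gt (div_lt_abs_of_lt_abs_mul_sqrt hτ hL hΥ
      (lt_abs_of_two_mul_lt_abs_of_abs_add_lt hΘ hsum))
  have hunion : μ.real {ω | 2 * t < |Θ ω|} ≤ μ.real {ω | t ≤ |τ * √(Υ ω) * Z ω + Θ ω|} +
      μ.real {ω | L < Υ ω} + μ.real {ω | r < |Z ω|} :=
    (measureReal_mono hcover).trans <| (measureReal_union_le _ _).trans <|
      add_le_add_left (measureReal_union_le _ _) _
  have hZtail := measureReal_abs_gt_le_two_mul_gaussQ hZm hZ r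
  simp only [measureReal_def] at hunion hZtail
  linarith

/-- Lower bound on the proportion of total positives (proof of Theorem 1):
`ℙ[|τ√Υ·Z + Θ| ≥ t] ≥ ℙ[|Θ| > 2t] − 2Q(t/(τ√L)) − L`. -/
theorem stmt14 {Ω : Type*} [MeasurableSpace Ω] (μ : Measure Ω) [IsProbabilityMeasure μ]
    (Z Υ Θ : Ω → ℝ) (hZm : Measurable Z) (hΥm : Measurable Υ) (hΘm : Measurable Θ)
    (hZ : μ.map Z = gaussianReal 0 1)
    (hindep : IndepFun Z (fun ω => (Θ ω, Υ ω)) μ)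
    (hΥ0 : ∀ᵐ ω ∂μ, 0 ≤ Υ ω)
    (L τ t : ℝ) (hL : 0 < L) (hτ : 0 < τ) (ht : 0 < t)
    (hLtail : (μ {ω | L < Υ ω}).toReal ≤ L) :
    (μ {ω | 2 * t < |Θ ω|}).toReal - 2 * gaussQ (t / (τ * Real.sqrt L)) - L ≤
      (μ {ω | t ≤ |τ * Real.sqrt (Υ ω) * Z ω + Θ ω|}).toReal :=
  stmt14_general μ Z Υ Θ hZm hZ L τ t hL hτ hLtail
end

section
/- Let (Ω, ℙ) be a probability space carrying random variables Z, Υ, Θ with Z standard Gaussian, Z independent of the pair (Θ, Υ), and Υ ≥ 0 almost surely. Let L > 0 satisfy ℙ[Υ > L] ≤ L, and let τ > 0 and t > 0. Then ℙ[|Θ| > 0 and |τ·√Υ·Z + Θ| < t] ≤ ℙ[0 < |Θ| ≤ 2t] + 2·Q(t/(τ√L)) + L. -/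
/-!
If `|Θ| > 2t` and `Υ ≤ L`, then `|τ√Υ Z + Θ| < t` forces the noise `τ√Υ Z` to exceed `t` in absolute
value, hence `|Z| > t/(τ√L)`. So the event is covered by `{0 < |Θ| ≤ 2t}`, `{|Z| > t/(τ√L)}` and
`{Υ > L}`, and the union bound together with the symmetry of `N(0,1)` gives the estimate.
-/

open MeasureTheory ProbabilityTheory

open Set

lemma gaussianReal_zero_Iio_neg (v : NNReal) (r : ℝ) :
    gaussianReal 0 v (Iio (-r)) = gaussianReal 0 v (Ioi r) := by
  have hneg : (gaussianReal 0 v).map (fun x ↦ -x) = gaussianReal 0 v := by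
    rw [gaussianReal_map_neg, neg_zero]
  conv_lhs => rw [← hneg, Measure.map_apply measurable_neg measurableSet_Iio]
  congr 1
  ext x
  simp

lemma gaussianReal_zero_real_lt_abs_le (v : NNReal) (r : ℝ) :
    (gaussianReal 0 v).real {x | r < |x|} ≤ 2 * (gaussianReal 0 v).real (Ioi r) := by
  have hsplit : {x : ℝ | r < |x|} = Ioi r ∪ Iio (-r) := by
    ext x
    simp only [mem_ofPred_eq, mem_union, mem_Ioi, mem_Iio, lt_abs, lt_neg]
  calc (gaussianReal 0 v).real {x | r < |x|}
      ≤ (gaussianReal 0 v).real (Ioi r) + (gaussianReal 0 v).real (Iio (-r)) :=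
        hsplit ▸ measureReal_union_le _ _
    _ = 2 * (gaussianReal 0 v).real (Ioi r) := by
        rw [measureReal_def _ (Iio _), gaussianReal_zero_Iio_neg, ← measureReal_def]; ring

lemma lt_abs_of_abs_add_lt {a θ t : ℝ} (hsum : |a + θ| < t) (hθ : 2 * t < |θ|) : t < |a| := by
  have := abs_sub_abs_le_abs_sub θ (-a)
  rw [sub_neg_eq_add, abs_neg, add_comm] at this
  linarith

lemma lt_abs_of_abs_mul_sqrt_add_lt {θ υ z L τ t : ℝ} (hτ : 0 < τ) (hL : 0 < L) (hυ : υ ≤ L)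
    (hθ : 2 * t < |θ|) (hsum : |τ * Real.sqrt υ * z + θ| < t) :
    t / (τ * Real.sqrt L) < |z| := by
  have hτL : 0 < τ * Real.sqrt L := mul_pos hτ (Real.sqrt_pos.mpr hL)
  rw [div_lt_iff₀ hτL]
  calc t < |τ * Real.sqrt υ * z| := lt_abs_of_abs_add_lt hsum hθ
    _ = τ * Real.sqrt υ * |z| := by rw [abs_mul, abs_of_nonneg (by positivity)]
    _ ≤ τ * Real.sqrt L * |z| := by gcongr
    _ = |z| * (τ * Real.sqrt L) := mul_comm _ _

theorem stmt15_general {Ω : Type*} [MeasurableSpace Ω] (μ : Measure Ω) [IsProbabilityMeasure μ]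
    (Z Υ Θ : Ω → ℝ) (hZm : Measurable Z)
    (hZ : μ.map Z = gaussianReal 0 1)
    (L τ t : ℝ) (hL : 0 < L) (hτ : 0 < τ)
    (hLtail : (μ {ω | L < Υ ω}).toReal ≤ L) :
    (μ {ω | 0 < |Θ ω| ∧ |τ * Real.sqrt (Υ ω) * Z ω + Θ ω| < t}).toReal ≤
      (μ {ω | 0 < |Θ ω| ∧ |Θ ω| ≤ 2 * t}).toReal + 2 * gaussQ (t / (τ * Real.sqrt L)) + L := by
  set r := t / (τ * Real.sqrt L)
  set S := {ω | 0 < |Θ ω| ∧ |τ * Real.sqrt (Υ ω) * Z ω + Θ ω| < t}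
  set B := {ω | 0 < |Θ ω| ∧ |Θ ω| ≤ 2 * t}
  set C := Z ⁻¹' {x | r < |x|}
  set D := {ω | L < Υ ω}
  have hcover : S ⊆ B ∪ C ∪ D := by
    rintro ω ⟨hθ, hsum⟩
    by_cases hsmall : |Θ ω| ≤ 2 * t
    · exact Or.inl (Or.inl ⟨hθ, hsmall⟩)
    by_cases hlarge : L < Υ ω
    · exact Or.inr hlarge
    exact Or.inl (Or.inr (lt_abs_of_abs_mul_sqrt_add_lt hτ hL (not_lt.mp hlarge)
      (not_le.mp hsmall) hsum))
  have hgauss : μ.real C ≤ 2 * gaussQ r := by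
    rw [← map_measureReal_apply hZm (measurableSet_lt measurable_const measurable_abs), hZ]
    exact gaussianReal_zero_real_lt_abs_le 1 r
  calc μ.real S ≤ μ.real (B ∪ C ∪ D) := measureReal_mono hcover
    _ ≤ μ.real B + μ.real C + μ.real D :=
      (measureReal_union_le _ _).trans (by gcongr; exact measureReal_union_le _ _)
    _ ≤ μ.real B + 2 * gaussQ r + L := add_le_add (add_le_add le_rfl hgauss) hLtail

/-- Bound on the proportion of false negatives (proof of Theorem 1):
`ℙ[|Θ| > 0, |τ√Υ·Z + Θ| < t] ≤ ℙ[0 < |Θ| ≤ 2t] + 2Q(t/(τ√L)) + L`. -/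
theorem stmt15 {Ω : Type*} [MeasurableSpace Ω] (μ : Measure Ω) [IsProbabilityMeasure μ]
    (Z Υ Θ : Ω → ℝ) (hZm : Measurable Z) (hΥm : Measurable Υ) (hΘm : Measurable Θ)
    (hZ : μ.map Z = gaussianReal 0 1)
    (hindep : IndepFun Z (fun ω => (Θ ω, Υ ω)) μ)
    (hΥ0 : ∀ᵐ ω ∂μ, 0 ≤ Υ ω)
    (L τ t : ℝ) (hL : 0 < L) (hτ : 0 < τ) (ht : 0 < t)
    (hLtail : (μ {ω | L < Υ ω}).toReal ≤ L) :
    (μ {ω | 0 < |Θ ω| ∧ |τ * Real.sqrt (Υ ω) * Z ω + Θ ω| < t}).toReal ≤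
      (μ {ω | 0 < |Θ ω| ∧ |Θ ω| ≤ 2 * t}).toReal + 2 * gaussQ (t / (τ * Real.sqrt L)) + L :=
  stmt15_general μ Z Υ Θ hZm hZ L τ t hL hτ hLtail
end

section
/- Let (Ω, ℙ) be a probability space carrying mutually independent random variables Θ, Υ, Z, with Z standard Gaussian and Υ ≥ 0 almost surely. Let L > 0 satisfy ℙ[Υ ≥ L] ≥ L, let τ ≥ σ > 0, and set α = ℙ[|Θ| > 0], assuming α < 1. Then for every t > 0: max{ ℙ[Θ = 0 and τ√Υ|Z| ≥ t], ℙ[|Θ| > 0 and |τ√Υ·Z + Θ| < t] } ≥ ((1−α)/(3−α)) · max{ 2L·Q(t/(σ√L)), ℙ[0 < |Θ| < t/2] }. -/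
/-! Write `W = τ √Υ Z`. As `Θ` is independent of `W`, the false-positive probability is exactly
`(1 - α) ℙ[|W| ≥ t]`, and `ℙ[|W| ≥ t] ≥ ℙ[Υ ≥ L] ℙ[|Z| ≥ t / (τ √L)] ≥ 2 L Q(t / (σ √L))`.
As `Z` is symmetric and independent of `Υ`, `W` is symmetric, so `ℙ[W ∈ (-t, 0]] = ℙ[W ∈ [0, t)]`
is at least `(1 - ℙ[|W| ≥ t]) / 2`; pairing `W ∈ (-t, 0]` with `Θ ∈ (0, t/2)` and `W ∈ [0, t)`
with `Θ ∈ (-t/2, 0)` produces false negatives, of probability at least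
`(1 - ℙ[|W| ≥ t]) / 2 · ℙ[0 < |Θ| < t/2]`. The constant `(1 - α) / (3 - α)` balances the two
bounds: either `ℙ[0 < |Θ| < t/2] ≤ (3 - α) ℙ[|W| ≥ t]` and the false positives suffice, or
`ℙ[|W| ≥ t] < 1 / (3 - α)` and the false negatives do. -/

open MeasureTheory ProbabilityTheory

open Set

lemma gaussQ_antitone : Antitone gaussQ := fun _ _ h =>
  ENNReal.toReal_mono (measure_ne_top _ _) (measure_mono (Ioi_subset_Ioi h))

lemma gaussQ_nonneg (r : ℝ) : 0 ≤ gaussQ r := ENNReal.toReal_nonneg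

lemma gaussianReal_le_abs_eq_two_mul_gaussQ {r : ℝ} (hr : 0 < r) :
    (gaussianReal 0 1 {x | r ≤ |x|}).toReal = 2 * gaussQ r := by
  have hsplit : {x : ℝ | r ≤ |x|} = Iic (-r) ∪ Ici r := by
    ext x
    simp only [mem_ofPred_eq, mem_union, mem_Iic, mem_Ici, le_abs, le_neg]
    tauto
  have hdisj : Disjoint (Iic (-r)) (Ici r) :=
    Iic_disjoint_Ici.mpr (by linarith)
  have hneg : gaussianReal 0 1 (Iic (-r)) = gaussianReal 0 1 (Ici r) := by
    have hpre : Iic (-r) = (fun x => -x) ⁻¹' Ici r := by ext; simp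
    rw [hpre, ← Measure.map_apply measurable_neg measurableSet_Ici, gaussianReal_map_neg, neg_zero]
  have := nullSingletonClass_gaussianReal (μ := 0) one_ne_zero
  rw [hsplit, measure_union hdisj measurableSet_Ici, hneg, measure_congr Ioi_ae_eq_Ici.symm,
    ENNReal.toReal_add (measure_ne_top _ _) (measure_ne_top _ _), gaussQ]
  ring

namespace ProbabilityTheory.IdentDistrib

variable {Ω : Type*} [MeasurableSpace Ω] {μ : Measure Ω} {W : Ω → ℝ}

lemma measure_Ioc_eq_Ico (hW : IdentDistrib W (-W) μ μ) (t : ℝ) :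
    μ (W ⁻¹' Ioc (-t) 0) = μ (W ⁻¹' Ico 0 t) := by
  rw [hW.measure_mem_eq measurableSet_Ioc]
  congr 1
  ext ω
  simp only [mem_preimage, Pi.neg_apply, mem_Ioc, mem_Ico, neg_lt_neg_iff, neg_nonpos]
  tauto

lemma one_sub_measure_le_two_mul [IsProbabilityMeasure μ] (hW : IdentDistrib W (-W) μ μ)
    (hWm : Measurable W) (t : ℝ) :
    1 - (μ {ω | t ≤ |W ω|}).toReal ≤ 2 * (μ (W ⁻¹' Ioc (-t) 0)).toReal := by
  have hcover : {ω | t ≤ |W ω|}ᶜ ⊆ W ⁻¹' Ioc (-t) 0 ∪ W ⁻¹' Ico 0 t := by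
    intro ω hω
    simp only [mem_compl_iff, mem_ofPred_eq, not_le, abs_lt] at hω
    rcases le_or_gt (W ω) 0 with h | h
    · exact Or.inl ⟨hω.1, h⟩
    · exact Or.inr ⟨h.le, hω.2⟩
  calc 1 - (μ {ω | t ≤ |W ω|}).toReal = (μ {ω | t ≤ |W ω|}ᶜ).toReal := by
        rw [prob_compl_eq_one_sub (measurableSet_le measurable_const hWm.abs),
          ENNReal.toReal_sub_of_le prob_le_one ENNReal.one_ne_top, ENNReal.toReal_one]
    _ ≤ (μ (W ⁻¹' Ioc (-t) 0) + μ (W ⁻¹' Ico 0 t)).toReal :=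
        ENNReal.toReal_mono (by finiteness) ((measure_mono hcover).trans (measure_union_le _ _))
    _ = 2 * (μ (W ⁻¹' Ioc (-t) 0)).toReal := by
        rw [← measure_Ioc_eq_Ico hW, ENNReal.toReal_add (measure_ne_top _ _) (measure_ne_top _ _)]
        ring

end ProbabilityTheory.IdentDistrib

lemma ProbabilityTheory.IndepFun.identDistrib_neg_of_odd {Ω β : Type*} [MeasurableSpace Ω]
    [MeasurableSpace β] {μ : Measure Ω} [IsFiniteMeasure μ] {Y : Ω → β} {Z : Ω → ℝ}
    (hind : IndepFun Y Z μ) (hY : AEMeasurable Y μ) (hZ : IdentDistrib Z (-Z) μ μ)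
    {g : β → ℝ → ℝ} (hg : Measurable (Function.uncurry g)) (hodd : ∀ y z, g y (-z) = -g y z) :
    IdentDistrib (fun ω => g (Y ω) (Z ω)) (-fun ω => g (Y ω) (Z ω)) μ μ := by
  have hpair := (IdentDistrib.refl hY).prodMk hZ hind (hind.comp measurable_id measurable_neg)
  have hneg : (-fun ω => g (Y ω) (Z ω)) = Function.uncurry g ∘ fun ω => (Y ω, (-Z) ω) := by
    ext ω
    simp [hodd]
  rw [hneg]
  exact hpair.comp hg

lemma identDistrib_neg_of_map_eq_gaussianReal {Ω : Type*} [MeasurableSpace Ω] {μ : Measure Ω}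
    {Z : Ω → ℝ} (hZm : Measurable Z) {v : NNReal} (hZ : μ.map Z = gaussianReal 0 v) :
    IdentDistrib Z (-Z) μ μ where
  aemeasurable_fst := hZm.aemeasurable
  aemeasurable_snd := hZm.neg.aemeasurable
  map_eq := by
    rw [show -Z = (fun x => -x) ∘ Z from rfl, ← Measure.map_map measurable_neg hZm, hZ,
      gaussianReal_map_neg, neg_zero]

section Threshold

variable {Ω : Type*} [MeasurableSpace Ω] {μ : Measure Ω} [IsProbabilityMeasure μ] {Θ W : Ω → ℝ}

lemma measure_eq_zero_and_le_abs_eq_mul (hind : IndepFun Θ W μ) (hΘm : Measurable Θ)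
    (t : ℝ) :
    (μ {ω | Θ ω = 0 ∧ t ≤ |W ω|}).toReal =
      (1 - (μ {ω | 0 < |Θ ω|}).toReal) * (μ {ω | t ≤ |W ω|}).toReal := by
  have hzero : (μ (Θ ⁻¹' {0})).toReal = 1 - (μ {ω | 0 < |Θ ω|}).toReal := by
    have : Θ ⁻¹' {0} = {ω | 0 < |Θ ω|}ᶜ := by ext; simp
    rw [this, prob_compl_eq_one_sub (measurableSet_lt measurable_const hΘm.abs),
      ENNReal.toReal_sub_of_le prob_le_one ENNReal.one_ne_top, ENNReal.toReal_one]
  rw [← hzero, ← ENNReal.toReal_mul]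
  exact congrArg _ (hind.measure_inter_preimage_eq_mul {0} {x | t ≤ |x|}
    (measurableSet_singleton 0) (measurableSet_le measurable_const measurable_abs))

lemma measure_Ioc_mul_le_measure_abs_add_lt (hind : IndepFun Θ W μ)
    (hW : IdentDistrib W (-W) μ μ) (hΘm : Measurable Θ) (t : ℝ) :
    (μ (W ⁻¹' Ioc (-t) 0)).toReal * (μ {ω | 0 < |Θ ω| ∧ |Θ ω| < t / 2}).toReal ≤
      (μ {ω | 0 < |Θ ω| ∧ |W ω + Θ ω| < t}).toReal := by
  set Gpos := W ⁻¹' Ioc (-t) 0 ∩ Θ ⁻¹' Ioo 0 (t / 2)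
  set Gneg := W ⁻¹' Ico 0 t ∩ Θ ⁻¹' Ioo (-(t / 2)) 0
  have hsplit : {ω | 0 < |Θ ω| ∧ |Θ ω| < t / 2} =
      Θ ⁻¹' Ioo 0 (t / 2) ∪ Θ ⁻¹' Ioo (-(t / 2)) 0 := by
    ext ω
    simp only [mem_ofPred_eq, mem_union, mem_preimage, mem_Ioo, abs_pos, abs_lt]
    constructor
    · rintro ⟨hne, h1, h2⟩
      rcases hne.lt_or_gt with h | h
      · exact Or.inr ⟨h1, h⟩
      · exact Or.inl ⟨h, h2⟩
    · rintro (⟨h1, h2⟩ | ⟨h1, h2⟩)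
      · exact ⟨h1.ne', by linarith, h2⟩
      · exact ⟨h2.ne, h1, by linarith⟩
  have hsub : Gpos ∪ Gneg ⊆ {ω | 0 < |Θ ω| ∧ |W ω + Θ ω| < t} := by
    rintro ω (⟨⟨hW1, hW2⟩, hΘ1, hΘ2⟩ | ⟨⟨hW1, hW2⟩, hΘ1, hΘ2⟩)
    · exact ⟨abs_pos.mpr hΘ1.ne', abs_lt.mpr ⟨by linarith, by linarith⟩⟩
    · exact ⟨abs_pos.mpr hΘ2.ne, abs_lt.mpr ⟨by linarith, by linarith⟩⟩
  have hdisjΘ : Disjoint (Θ ⁻¹' Ioo 0 (t / 2)) (Θ ⁻¹' Ioo (-(t / 2)) 0) :=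
    disjoint_left.mpr fun _ h1 h2 => lt_asymm h1.1 h2.2
  have hprod (I J : Set ℝ) (hI : MeasurableSet I) (hJ : MeasurableSet J) :
      (μ (W ⁻¹' I ∩ Θ ⁻¹' J)).toReal = (μ (W ⁻¹' I)).toReal * (μ (Θ ⁻¹' J)).toReal := by
    rw [hind.symm.measure_inter_preimage_eq_mul _ _ hI hJ, ENNReal.toReal_mul]
  calc (μ (W ⁻¹' Ioc (-t) 0)).toReal * (μ {ω | 0 < |Θ ω| ∧ |Θ ω| < t / 2}).toReal
      = (μ Gpos).toReal + (μ Gneg).toReal := by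
        rw [hsplit, measure_union hdisjΘ (hΘm measurableSet_Ioo),
          ENNReal.toReal_add (measure_ne_top _ _) (measure_ne_top _ _),
          hprod _ _ measurableSet_Ioc measurableSet_Ioo,
          hprod _ _ measurableSet_Ico measurableSet_Ioo, hW.measure_Ioc_eq_Ico]
        ring
    _ = (μ (Gpos ∪ Gneg)).toReal := by
        rw [measure_union₀ ((hW.aemeasurable_fst.nullMeasurableSet_preimage measurableSet_Ico).inter
          (hΘm measurableSet_Ioo).nullMeasurableSet)
          (hdisjΘ.mono inter_subset_right inter_subset_right).aedisjoint,
          ENNReal.toReal_add (measure_ne_top _ _) (measure_ne_top _ _)]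
    _ ≤ (μ {ω | 0 < |Θ ω| ∧ |W ω + Θ ω| < t}).toReal :=
        ENNReal.toReal_mono (measure_ne_top _ _) (measure_mono hsub)

lemma two_mul_gaussQ_le_measure_le_abs {Υ Z : Ω → ℝ} (hind : IndepFun Υ Z μ)
    (hZm : Measurable Z) (hZ : μ.map Z = gaussianReal 0 1) {L τ σ t : ℝ} (hL : 0 < L)
    (hσ : 0 < σ) (hτσ : σ ≤ τ) (hLtail : L ≤ (μ {ω | L ≤ Υ ω}).toReal) (ht : 0 < t) :
    2 * L * gaussQ (t / (σ * √L)) ≤ (μ {ω | t ≤ |τ * √(Υ ω) * Z ω|}).toReal := by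
  have hτ : 0 < τ := hσ.trans_le hτσ
  set r := t / (τ * √L)
  have hr : 0 < r := by positivity
  have hZtail : (μ (Z ⁻¹' {x | r ≤ |x|})).toReal = 2 * gaussQ r := by
    rw [← gaussianReal_le_abs_eq_two_mul_gaussQ hr, ← hZ,
      Measure.map_apply hZm (measurableSet_le measurable_const measurable_abs)]
  have hsub : Υ ⁻¹' Ici L ∩ Z ⁻¹' {x | r ≤ |x|} ⊆ {ω | t ≤ |τ * √(Υ ω) * Z ω|} := by
    rintro ω ⟨hΥ, hZr⟩
    calc t = τ * √L * r := (mul_div_cancel₀ t (by positivity)).symm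
      _ ≤ τ * √(Υ ω) * |Z ω| := by gcongr; exacts [hΥ, hZr]
      _ = |τ * √(Υ ω) * Z ω| := by
        rw [abs_mul, abs_mul, abs_of_pos hτ, abs_of_nonneg (Real.sqrt_nonneg _)]
  have hQ : gaussQ (t / (σ * √L)) ≤ gaussQ r :=
    gaussQ_antitone (div_le_div_of_nonneg_left ht.le (by positivity) (by gcongr))
  calc 2 * L * gaussQ (t / (σ * √L)) ≤ L * (2 * gaussQ r) := by
        rw [← mul_assoc, mul_comm L 2]
        exact mul_le_mul_of_nonneg_left hQ (by positivity)
    _ ≤ (μ (Υ ⁻¹' Ici L)).toReal * (μ (Z ⁻¹' {x | r ≤ |x|})).toReal := by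
        rw [hZtail]
        exact mul_le_mul_of_nonneg_right hLtail (by linarith [gaussQ_nonneg r])
    _ = (μ (Υ ⁻¹' Ici L ∩ Z ⁻¹' {x | r ≤ |x|})).toReal := by
        rw [hind.measure_inter_preimage_eq_mul _ _ measurableSet_Ici
          (measurableSet_le measurable_const measurable_abs), ENNReal.toReal_mul]
    _ ≤ (μ {ω | t ≤ |τ * √(Υ ω) * Z ω|}).toReal :=
        ENNReal.toReal_mono (measure_ne_top _ _) (measure_mono hsub)

end Threshold

lemma mul_max_le_max_of_tradeoff {α p s A B FN : ℝ} (hα0 : 0 ≤ α) (hα1 : α ≤ 1) (hp : 0 ≤ p)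
    (hA : A ≤ p) (hB0 : 0 ≤ B) (hB1 : B ≤ 1) (hs : 1 - p ≤ 2 * s) (hFN : s * B ≤ FN) :
    (1 - α) / (3 - α) * max A B ≤ max ((1 - α) * p) FN := by
  have h3 : 0 < 3 - α := by linarith
  have hc0 : 0 ≤ (1 - α) / (3 - α) := div_nonneg (by linarith) h3.le
  have hc1 : (1 - α) / (3 - α) ≤ 1 - α := div_le_self (by linarith) (by linarith)
  rw [mul_max_of_nonneg _ _ hc0]
  refine max_le (le_max_of_le_left ?_) ?_
  · calc (1 - α) / (3 - α) * A ≤ (1 - α) / (3 - α) * p := mul_le_mul_of_nonneg_left hA hc0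
      _ ≤ (1 - α) * p := mul_le_mul_of_nonneg_right hc1 hp
  rcases le_total B ((3 - α) * p) with hBp | hBp
  · refine le_max_of_le_left ?_
    rw [div_mul_eq_mul_div, div_le_iff₀ h3]
    nlinarith
  · refine le_max_of_le_right ((mul_le_mul_of_nonneg_right ?_ hB0).trans hFN)
    rw [div_le_iff₀ h3]
    nlinarith

theorem stmt17_general {Ω : Type*} [MeasurableSpace Ω] (μ : Measure Ω) [IsProbabilityMeasure μ]
    (Θ Υ Z : Ω → ℝ) (hΘm : Measurable Θ) (hΥm : Measurable Υ) (hZm : Measurable Z)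
    (hZ : μ.map Z = gaussianReal 0 1)
    (hindep : iIndepFun ![Θ, Υ, Z] μ)
    (L τ σ : ℝ) (hL : 0 < L) (hσ : 0 < σ) (hτσ : σ ≤ τ)
    (hLtail : L ≤ (μ {ω | L ≤ Υ ω}).toReal)
    (α : ℝ) (hα : α = (μ {ω | 0 < |Θ ω|}).toReal)
    (t : ℝ) (ht : 0 < t) :
    ((1 - α) / (3 - α)) *
        max (2 * L * gaussQ (t / (σ * Real.sqrt L)))
          ((μ {ω | 0 < |Θ ω| ∧ |Θ ω| < t / 2}).toReal) ≤
      max ((μ {ω | Θ ω = 0 ∧ t ≤ τ * Real.sqrt (Υ ω) * |Z ω|}).toReal)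
        ((μ {ω | 0 < |Θ ω| ∧ |τ * Real.sqrt (Υ ω) * Z ω + Θ ω| < t}).toReal) := by
  set W : Ω → ℝ := fun ω => τ * √(Υ ω) * Z ω
  have hW_abs (ω : Ω) : τ * √(Υ ω) * |Z ω| = |W ω| := by
    rw [abs_mul, abs_mul, abs_of_nonneg (hσ.le.trans hτσ), abs_of_nonneg (Real.sqrt_nonneg _)]
  have hmeas (i : Fin 3) : Measurable (![Θ, Υ, Z] i) := by fin_cases i <;> assumption
  have hΥZ : IndepFun Υ Z μ := hindep.indepFun (i := 1) (j := 2) (by decide)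
  have hg : Measurable fun q : ℝ × ℝ => τ * √q.1 * q.2 := by fun_prop
  have hΘW : IndepFun Θ W μ :=
    ((hindep.indepFun_prodMk hmeas 1 2 0 (by decide) (by decide)).comp hg measurable_id).symm
  have hW_symm : IdentDistrib W (-W) μ μ :=
    hΥZ.identDistrib_neg_of_odd (g := fun y z => τ * √y * z) hΥm.aemeasurable
      (identDistrib_neg_of_map_eq_gaussianReal hZm hZ) hg fun _ _ => mul_neg _ _
  simp only [hW_abs]
  rw [measure_eq_zero_and_le_abs_eq_mul hΘW hΘm t, ← hα]
  exact mul_max_le_max_of_tradeoff (hα ▸ ENNReal.toReal_nonneg) (hα ▸ measureReal_le_one)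
    ENNReal.toReal_nonneg (two_mul_gaussQ_le_measure_le_abs hΥZ hZm hZ hL hσ hτσ hLtail ht)
    ENNReal.toReal_nonneg measureReal_le_one
    (hW_symm.one_sub_measure_le_two_mul ((measurable_const.mul hΥm.sqrt).mul hZm) t)
    (measure_Ioc_mul_le_measure_abs_add_lt hΘW hW_symm hΘm t)

/-- Quantitative core of Proposition 2 (lower bound for thresholded Lasso):
for mutually independent `Θ, Υ, Z` with `Z` standard Gaussian, `Υ ≥ 0`,
`ℙ[Υ ≥ L] ≥ L`, `τ ≥ σ > 0` and `α = ℙ[|Θ| > 0] < 1`, the max of the false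
positive and false negative proportions at any threshold `t > 0` is at least
`((1−α)/(3−α)) · max{2L·Q(t/(σ√L)), ℙ[0 < |Θ| < t/2]}`. -/
theorem stmt17 {Ω : Type*} [MeasurableSpace Ω] (μ : Measure Ω) [IsProbabilityMeasure μ]
    (Θ Υ Z : Ω → ℝ) (hΘm : Measurable Θ) (hΥm : Measurable Υ) (hZm : Measurable Z)
    (hZ : μ.map Z = gaussianReal 0 1)
    (hindep : iIndepFun ![Θ, Υ, Z] μ)
    (hΥ0 : ∀ᵐ ω ∂μ, 0 ≤ Υ ω)
    (L τ σ : ℝ) (hL : 0 < L) (hσ : 0 < σ) (hτσ : σ ≤ τ)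
    (hLtail : L ≤ (μ {ω | L ≤ Υ ω}).toReal)
    (α : ℝ) (hα : α = (μ {ω | 0 < |Θ ω|}).toReal) (hα1 : α < 1)
    (t : ℝ) (ht : 0 < t) :
    ((1 - α) / (3 - α)) *
        max (2 * L * gaussQ (t / (σ * Real.sqrt L)))
          ((μ {ω | 0 < |Θ ω| ∧ |Θ ω| < t / 2}).toReal) ≤
      max ((μ {ω | Θ ω = 0 ∧ t ≤ τ * Real.sqrt (Υ ω) * |Z ω|}).toReal)
        ((μ {ω | 0 < |Θ ω| ∧ |τ * Real.sqrt (Υ ω) * Z ω + Θ ω| < t}).toReal) :=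
  stmt17_general μ Θ Υ Z hΘm hΥm hZm hZ hindep L τ σ hL hσ hτσ hLtail α hα t ht
end

section
/- Let Z₁, Z₂ be independent standard Gaussian random variables, let ρ ∈ (−1, 1), and define U = Z₁ and V = ρ·Z₁ + √(1−ρ²)·Z₂ (so that U and V are standard Gaussian with correlation ρ). Then ℙ[U ≥ 0 and |V| ≥ U] = 1/4. -/
/-! With `θ = arccos ρ`, `(U, V)` is the image of `(Z₁, Z₂)` under
`F (x, y) = (x, cos θ * x + sin θ * y)`. The law of `(Z₁, Z₂)` is invariant under rotations and
under `(x, y) ↦ (x, -y)`, hence under the reflection exchanging `(1, 0)` and `(cos θ, sin θ)`;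
through `F` this makes the law of `(U, V)` invariant under `(u, v) ↦ (v, u)` and under
`(u, v) ↦ (-u, -v)`, and it charges no line. The swap gives `ℙ[|U| ≤ |V|] = 1/2`, and the
negation splits that event into `{0 ≤ U ≤ |V|}` and its mirror image, which meet on the null
line `U = 0`. -/

open MeasureTheory ProbabilityTheory Real

section SymmetricPlaneMeasure

lemma volume_setOf_linear_eq_zero {a b : ℝ} (hab : (a, b) ≠ 0) :
    volume {p : ℝ × ℝ | a * p.1 + b * p.2 = 0} = 0 := by
  let L : ℝ × ℝ →ₗ[ℝ] ℝ := a • LinearMap.fst ℝ ℝ ℝ + b • LinearMap.snd ℝ ℝ ℝ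
  have hL : {p : ℝ × ℝ | a * p.1 + b * p.2 = 0} = LinearMap.ker L := by
    ext p; simp [L]
  rw [hL]
  refine Measure.addHaar_submodule _ _ fun htop => hab ?_
  have ha : a = 0 := by simpa [L] using LinearMap.congr_fun (LinearMap.ker_eq_top.mp htop) (1, 0)
  have hb : b = 0 := by simpa [L] using LinearMap.congr_fun (LinearMap.ker_eq_top.mp htop) (0, 1)
  simp [ha, hb]

lemma measurableSet_nonneg_le_abs : MeasurableSet {p : ℝ × ℝ | 0 ≤ p.1 ∧ p.1 ≤ |p.2|} :=
  (measurableSet_le measurable_const measurable_fst).inter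
    (measurableSet_le measurable_fst measurable_snd.abs)

variable {ν : Measure (ℝ × ℝ)} [IsProbabilityMeasure ν]

lemma measureReal_abs_le_abs_eq_half (hν : ν ≪ volume)
    (hswap : MeasurePreserving Prod.swap ν ν) :
    ν.real {p | |p.1| ≤ |p.2|} = 1 / 2 := by
  set S : Set (ℝ × ℝ) := {p | |p.1| ≤ |p.2|}
  have hS : MeasurableSet S := measurableSet_le (by fun_prop) (by fun_prop)
  have hdiag : ν {p : ℝ × ℝ | |p.1| = |p.2|} = 0 := by
    refine measure_mono_null (t := {p | 1 * p.1 + (-1) * p.2 = 0} ∪ {p | 1 * p.1 + 1 * p.2 = 0})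
      (fun p hp => ?_) (measure_union_null (hν ?_) (hν ?_))
    · rcases abs_eq_abs.mp hp with h | h
      · left; simp only [Set.mem_ofPred_eq]; linarith
      · right; simp only [Set.mem_ofPred_eq]; linarith
    all_goals exact volume_setOf_linear_eq_zero (by simp)
  have hcover : S ∪ Prod.swap ⁻¹' S = Set.univ := by
    ext p; simpa [S] using le_total |p.1| |p.2|
  have hdisj : AEDisjoint ν S (Prod.swap ⁻¹' S) :=
    measure_mono_null (fun p hp => le_antisymm hp.1 hp.2) hdiag
  have := measureReal_union₀ (hS.preimage measurable_swap).nullMeasurableSet hdisj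
  rw [hcover, hswap.measureReal_preimage hS.nullMeasurableSet, probReal_univ] at this
  linarith

theorem measureReal_nonneg_le_abs_eq_quarter (hν : ν ≪ volume)
    (hswap : MeasurePreserving Prod.swap ν ν) (hneg : MeasurePreserving Neg.neg ν ν) :
    ν.real {p | 0 ≤ p.1 ∧ p.1 ≤ |p.2|} = 1 / 4 := by
  set E : Set (ℝ × ℝ) := {p | 0 ≤ p.1 ∧ p.1 ≤ |p.2|}
  have hE : MeasurableSet E := measurableSet_nonneg_le_abs
  have hcover : E ∪ Neg.neg ⁻¹' E = {p | |p.1| ≤ |p.2|} := by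
    ext p
    simp only [E, Set.mem_union, Set.mem_preimage, Set.mem_ofPred_eq, Prod.fst_neg, Prod.snd_neg,
      abs_neg]
    rcases le_total 0 p.1 with h | h
    · rw [abs_of_nonneg h]; grind
    · rw [abs_of_nonpos h]; grind
  have hdisj : AEDisjoint ν E (Neg.neg ⁻¹' E) := by
    refine measure_mono_null (fun p hp => ?_)
      (hν (volume_setOf_linear_eq_zero (a := 1) (b := 0) (by simp)))
    simp only [E, Set.mem_inter_iff, Set.mem_preimage, Set.mem_ofPred_eq, Prod.fst_neg] at hp
    simp only [Set.mem_ofPred_eq]; linarith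
  have := measureReal_union₀ (hE.preimage measurable_neg).nullMeasurableSet hdisj
  rw [hcover, measureReal_abs_le_abs_eq_half hν hswap,
    hneg.measureReal_preimage hE.nullMeasurableSet] at this
  linarith

end SymmetricPlaneMeasure

noncomputable abbrev stdGaussianPlane : Measure (ℝ × ℝ) :=
  (gaussianReal 0 1).prod (gaussianReal 0 1)

lemma stdGaussianPlane_absolutelyContinuous : stdGaussianPlane ≪ volume := by
  rw [Measure.volume_eq_prod]
  exact (gaussianReal_absolutelyContinuous 0 one_ne_zero).prod
    (gaussianReal_absolutelyContinuous 0 one_ne_zero)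

lemma stdGaussianPlane_map_absolutelyContinuous {f : ℝ × ℝ →ₗ[ℝ] ℝ × ℝ}
    (hf : LinearMap.det f ≠ 0) : stdGaussianPlane.map f ≪ volume :=
  (stdGaussianPlane_absolutelyContinuous.map f.continuous_of_finiteDimensional.measurable).trans
    (Measure.LinearMap.quasiMeasurePreserving volume f hf).absolutelyContinuous

lemma measurePreserving_rotation_stdGaussianPlane (θ : ℝ) :
    MeasurePreserving (ContinuousLinearMap.rotation θ) stdGaussianPlane stdGaussianPlane :=
  ⟨(ContinuousLinearMap.rotation θ).continuous.measurable,
    IsGaussian.map_rotation_eq_self (by simp [integral_id_gaussianReal]) θ⟩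

lemma measurePreserving_neg_stdGaussianPlane :
    MeasurePreserving Neg.neg stdGaussianPlane stdGaussianPlane := by
  convert measurePreserving_rotation_stdGaussianPlane π using 1
  ext p <;> simp [ContinuousLinearMap.rotation_apply]

lemma measurePreserving_reflection_stdGaussianPlane (θ : ℝ) :
    MeasurePreserving (fun p : ℝ × ℝ => (cos θ * p.1 + sin θ * p.2, sin θ * p.1 - cos θ * p.2))
      stdGaussianPlane stdGaussianPlane := by
  have hflip : MeasurePreserving (Prod.map id Neg.neg) stdGaussianPlane stdGaussianPlane := by
    refine ⟨by fun_prop, ?_⟩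
    rw [← Measure.map_prod_map _ _ measurable_id measurable_neg, Measure.map_id,
      gaussianReal_map_neg, neg_zero]
  convert hflip.comp (measurePreserving_rotation_stdGaussianPlane θ) using 1
  ext p <;> simp [ContinuousLinearMap.rotation_apply]
  ring

lemma measureReal_nonneg_le_abs_correlated_eq_quarter {θ : ℝ} (hθ : sin θ ≠ 0) :
    (stdGaussianPlane.map fun p : ℝ × ℝ => (p.1, cos θ * p.1 + sin θ * p.2)).real
      {p | 0 ≤ p.1 ∧ p.1 ≤ |p.2|} = 1 / 4 := by
  -- `F` is given by its matrix so that `LinearMap.det F = sin θ` is a computation.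
  set F : ℝ × ℝ →ₗ[ℝ] ℝ × ℝ :=
    Matrix.toLin (Module.Basis.finTwoProd ℝ) (Module.Basis.finTwoProd ℝ) !![1, 0; cos θ, sin θ]
  have hF : ⇑F = fun p : ℝ × ℝ => (p.1, cos θ * p.1 + sin θ * p.2) := by
    ext p <;> simp [F, Matrix.toLin_finTwoProd_apply]
  have hFγ : MeasurePreserving F stdGaussianPlane (stdGaussianPlane.map F) :=
    ⟨F.continuous_of_finiteDimensional.measurable, rfl⟩
  have : IsProbabilityMeasure (stdGaussianPlane.map F) :=
    Measure.isProbabilityMeasure_map hFγ.measurable.aemeasurable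
  rw [← hF]
  refine measureReal_nonneg_le_abs_eq_quarter ?_ ?_ ?_
  · refine stdGaussianPlane_map_absolutelyContinuous ?_
    simpa [F, LinearMap.det_toLin, Matrix.det_fin_two_of] using hθ
  · refine hFγ.of_semiconj (measurePreserving_reflection_stdGaussianPlane θ) (fun p => ?_)
      measurable_swap
    simp only [hF, Prod.swap_prod_mk, Prod.mk.injEq, true_and]
    linear_combination p.1 * sin_sq_add_cos_sq θ
  · exact hFγ.of_semiconj measurePreserving_neg_stdGaussianPlane (map_neg F) measurable_neg

/-- Final step in the proof of Proposition 4: for jointly Gaussian standard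
`U, V` with correlation `ρ ∈ (−1,1)`, built as `U = Z₁`,
`V = ρ·Z₁ + √(1−ρ²)·Z₂` from independent standard Gaussians `Z₁, Z₂`,
`ℙ[U ≥ 0, |V| ≥ U] = 1/4`. -/
theorem stmt19 {Ω : Type*} [MeasurableSpace Ω] (μ : Measure Ω) [IsProbabilityMeasure μ]
    (Z₁ Z₂ : Ω → ℝ) (h1m : Measurable Z₁) (h2m : Measurable Z₂)
    (h1 : μ.map Z₁ = gaussianReal 0 1) (h2 : μ.map Z₂ = gaussianReal 0 1)
    (hindep : IndepFun Z₁ Z₂ μ)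
    (ρ : ℝ) (hρ0 : -1 < ρ) (hρ1 : ρ < 1)
    (U V : Ω → ℝ)
    (hU : U = Z₁)
    (hV : V = fun ω => ρ * Z₁ ω + Real.sqrt (1 - ρ ^ 2) * Z₂ ω) :
    (μ {ω | 0 ≤ U ω ∧ U ω ≤ |V ω|}).toReal = 1 / 4 := by
  set θ := arccos ρ
  have hcos : cos θ = ρ := cos_arccos hρ0.le hρ1.le
  have hsin : sin θ = √(1 - ρ ^ 2) := sin_arccos ρ
  have hsin_ne : sin θ ≠ 0 := by rw [hsin]; exact (sqrt_pos.mpr (by nlinarith)).ne'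
  set F : ℝ × ℝ → ℝ × ℝ := fun p => (p.1, cos θ * p.1 + sin θ * p.2)
  have hZ : μ.map (fun ω => (Z₁ ω, Z₂ ω)) = stdGaussianPlane := by
    rw [(indepFun_iff_map_prod_eq_prod_map_map h1m.aemeasurable h2m.aemeasurable).mp hindep,
      h1, h2]
  have hUV : (fun ω => (U ω, V ω)) = F ∘ fun ω => (Z₁ ω, Z₂ ω) := by
    funext ω; simp [F, hU, hV, hcos, hsin]
  have hFm : Measurable F := by fun_prop
  calc (μ {ω | 0 ≤ U ω ∧ U ω ≤ |V ω|}).toReal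
      = (μ.map fun ω => (U ω, V ω)).real {p | 0 ≤ p.1 ∧ p.1 ≤ |p.2|} := by
        rw [map_measureReal_apply (by rw [hUV]; exact hFm.comp (h1m.prodMk h2m))
          measurableSet_nonneg_le_abs]
        rfl
    _ = (stdGaussianPlane.map F).real {p | 0 ≤ p.1 ∧ p.1 ≤ |p.2|} := by
        rw [hUV, ← Measure.map_map hFm (h1m.prodMk h2m), hZ]
    _ = 1 / 4 := measureReal_nonneg_le_abs_correlated_eq_quarter hsin_ne
end
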